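/- Let A be an n×n real symmetric positive definite matrix, p_i := A_{ii}/Tr(A), Z_i := (1/A_{ii}) · A^{1/2} e_i e_iᵀ A^{1/2}, and G := Σ_{i=1}^n p_i Z_i = A/Tr(A). Then Σ_{i=1}^n p_i · G^{-1/2} Z_i G^{-1} Z_i G^{-1/2} = Tr(A) · diag(A_{11}^{-1}, …, A_{nn}^{-1}); consequently the largest eigenvalue of this matrix equals ν = Tr(A) / (min_{1≤i≤n} A_{ii}). -/

import Mathlib

open Matrix Finset

open scoped ComplexOrder in
/-- The positive semidefinite square root, as defined in Mathlib (Dec 2024) and since removed. -/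
noncomputable def Matrix.PosSemidef.sqrt {n : Type*} [Fintype n] [DecidableEq n]
    {𝕜 : Type*} [RCLike 𝕜] {A : Matrix n n 𝕜} (hA : A.PosSemidef) : Matrix n n 𝕜 :=
  hA.1.eigenvectorUnitary.1 * diagonal ((↑) ∘ (√·) ∘ hA.1.eigenvalues) *
  (star hA.1.eigenvectorUnitary : Matrix n n 𝕜)

/-!
Write `T = A^{1/2}`. The weights `pᵢ` cancel the normalisation of `Zᵢ`, so
`G = T (∑ᵢ eᵢeᵢᵀ) T / Tr A = A / Tr A`; hence `G⁻¹ = Tr A · T⁻¹T⁻¹` and `G^{-1/2} = √(Tr A) · T⁻¹`.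
Since `T⁻¹ (T eᵢeᵢᵀ T) T⁻¹ = eᵢeᵢᵀ` is idempotent, the `i`-th summand collapses to
`(Tr A / Aᵢᵢ) eᵢeᵢᵀ`. The matrix is therefore diagonal, and its largest eigenvalue is its largest
diagonal entry `Tr A / minᵢ Aᵢᵢ`.
-/

namespace Matrix

variable {n : Type*} [Fintype n] [DecidableEq n]

section RCLike

variable {𝕜 : Type*} [RCLike 𝕜]

namespace PosSemidef

open scoped MatrixOrder ComplexOrder

variable {A : Matrix n n 𝕜}

theorem sqrt_eq_cfcSqrt (hA : A.PosSemidef) : hA.sqrt = CFC.sqrt A := by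
  rw [CFC.sqrt_eq_cfc, cfc_nnreal_eq_real _ A hA.nonneg, hA.1.cfc_eq]
  simp only [IsHermitian.cfc, Unitary.conjStarAlgAut_apply, PosSemidef.sqrt]
  congr 3
  ext i
  simp [Real.coe_sqrt, Real.coe_toNNReal', max_eq_left (hA.eigenvalues_nonneg i)]

theorem sqrt_mul_self (hA : A.PosSemidef) : hA.sqrt * hA.sqrt = A := by
  rw [hA.sqrt_eq_cfcSqrt]
  exact CFC.sqrt_mul_sqrt_self A hA.nonneg

theorem posSemidef_sqrt (hA : A.PosSemidef) : hA.sqrt.PosSemidef := by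
  rw [hA.sqrt_eq_cfcSqrt]
  exact (CFC.sqrt_nonneg A).posSemidef

theorem eq_sqrt_of_sq_eq (hA : A.PosSemidef) {B : Matrix n n 𝕜} (hB : B.PosSemidef)
    (hAB : A ^ 2 = B) : A = hB.sqrt := by
  rw [hB.sqrt_eq_cfcSqrt]
  exact (CFC.sqrt_unique (by rw [← sq]; exact hAB) hA.nonneg).symm

theorem sqrt_eq_smul_inv_sqrt (hA : A.PosSemidef) {B : Matrix n n 𝕜} (hB : B.PosSemidef)
    {c : ℝ} (hc : 0 ≤ c) (hBA : B = c • A⁻¹) : hB.sqrt = √c • hA.sqrt⁻¹ := by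
  refine (eq_sqrt_of_sq_eq (hA.posSemidef_sqrt.inv.smul (Real.sqrt_nonneg c)) hB ?_).symm
  rw [sq, smul_mul_smul_comm, ← Matrix.mul_inv_rev, hA.sqrt_mul_self, ← sq, Real.sq_sqrt hc,
    hBA]

end PosSemidef

open scoped ComplexOrder in
theorem PosDef.isUnit_det_sqrt {A : Matrix n n 𝕜} (hA : A.PosDef) :
    IsUnit hA.posSemidef.sqrt.det := by
  refine isUnit_of_mul_isUnit_left (y := hA.posSemidef.sqrt.det) ?_
  rw [← det_mul, hA.posSemidef.sqrt_mul_self]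
  exact hA.isUnit.map detMonoidHom

end RCLike

theorem nonsing_inv_mul_mul_mul_nonsing_inv {R : Type*} [CommRing R] {T : Matrix n n R}
    (hT : IsUnit T.det) (X : Matrix n n R) : T⁻¹ * (T * X * T) * T⁻¹ = X := by
  rw [mul_assoc T, nonsing_inv_mul_cancel_left _ _ hT, mul_nonsing_inv_cancel_right _ _ hT]

theorem inv_smul_eq_smul_inv {A : Matrix n n ℝ} (hA : IsUnit A.det) {c : ℝ} (hc : c ≠ 0) :
    (c⁻¹ • A)⁻¹ = c • A⁻¹ :=
  inv_eq_right_inv (by rw [smul_mul_smul_comm, inv_mul_cancel₀ hc, one_smul, mul_nonsing_inv _ hA])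

theorem sum_div_smul_inv_smul_conj_single (T : Matrix n n ℝ) {d : n → ℝ} (hd : ∀ i, d i ≠ 0)
    (c : ℝ) : ∑ i, (d i / c) • ((d i)⁻¹ • (T * single i i 1 * T)) = c⁻¹ • (T * T) := by
  have hweight (i : n) : d i / c * (d i)⁻¹ = c⁻¹ := by field_simp [hd i]
  simp only [smul_smul, hweight, ← Finset.smul_sum]
  rw [← Finset.sum_mul, ← Finset.mul_sum, sum_single_one, mul_one]

/-- The scaled summand `pᵢ G^{-1/2} Zᵢ G⁻¹ Zᵢ G^{-1/2}`, with `G = T² / c`, `Zᵢ = T eᵢeᵢᵀ T / a`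
and `pᵢ = a / c`. -/
theorem div_smul_sandwich_conj_single {T : Matrix n n ℝ} (hT : IsUnit T.det) {a c : ℝ}
    (ha : a ≠ 0) (hc : 0 < c) (i : n) :
    (a / c) • ((√c • T⁻¹) * (a⁻¹ • (T * single i i 1 * T)) * (c • (T * T)⁻¹) *
      (a⁻¹ • (T * single i i 1 * T)) * (√c • T⁻¹)) = (c / a) • single i i 1 := by
  have hconj : T⁻¹ * (T * single i i 1 * T) * (T⁻¹ * T⁻¹) * (T * single i i 1 * T) * T⁻¹
      = (T⁻¹ * (T * single i i 1 * T) * T⁻¹) * (T⁻¹ * (T * single i i 1 * T) * T⁻¹) := by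
    simp only [mul_assoc]
  simp only [Matrix.mul_inv_rev, Matrix.smul_mul, Matrix.mul_smul, smul_smul]
  rw [hconj, nonsing_inv_mul_mul_mul_nonsing_inv hT, single_mul_single_same, mul_one]
  congr 1
  field_simp
  rw [Real.sq_sqrt hc.le]

theorem IsHermitian.iSup_eigenvalues_of_eq_diagonal {M : Matrix n n ℝ} (hM : M.IsHermitian)
    {d : n → ℝ} (hMd : M = diagonal d) : ⨆ j, hM.eigenvalues j = ⨆ i, d i := by
  subst hMd
  rw [iSup, iSup, ← hM.spectrum_real_eq_range_eigenvalues, spectrum_diagonal]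

end Matrix

theorem Real.ciSup_div_eq_div_ciInf {ι : Type*} [Finite ι] [Nonempty ι] {c : ℝ} (hc : 0 ≤ c)
    {d : ι → ℝ} (hd : ∀ i, 0 < d i) : ⨆ i, c / d i = c / ⨅ i, d i := by
  obtain ⟨i₀, hi₀⟩ := exists_eq_ciInf_of_finite (f := d)
  rw [← hi₀]
  refine le_antisymm (ciSup_le fun i => ?_)
    (le_ciSup (f := fun i => c / d i) (Set.finite_range _).bddAbove i₀)
  exact div_le_div_of_nonneg_left hc (hd i₀) (hi₀ ▸ ciInf_le (Set.finite_range d).bddBelow i)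

/-- For an n×n real symmetric positive definite matrix A (n ≥ 1), with
pᵢ := Aᵢᵢ/Tr(A), Zᵢ := (1/Aᵢᵢ) A^{1/2} eᵢ eᵢᵀ A^{1/2} and G := Σ pᵢ Zᵢ, one has
Σ pᵢ G^{-1/2} Zᵢ G⁻¹ Zᵢ G^{-1/2} = Tr(A)·diag(A₁₁⁻¹, …, A_nn⁻¹); consequently the
largest eigenvalue of this matrix equals ν = Tr(A)/min_i Aᵢᵢ. -/
theorem nu_convenient_probabilities {n : ℕ} (hn : 0 < n)
    (A : Matrix (Fin n) (Fin n) ℝ) (hA : A.PosDef)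
    (p : Fin n → ℝ) (hp : ∀ i, p i = A i i / A.trace)
    (Z : Fin n → Matrix (Fin n) (Fin n) ℝ)
    (hZ : ∀ i, Z i = (A i i)⁻¹ •
      (hA.posSemidef.sqrt * Matrix.single i i 1 * hA.posSemidef.sqrt))
    (G : Matrix (Fin n) (Fin n) ℝ) (hG : G = ∑ i, p i • Z i)
    (hGinv : (G⁻¹).PosSemidef) :
    (∑ i, p i • (hGinv.sqrt * Z i * G⁻¹ * Z i * hGinv.sqrt)
        = A.trace • Matrix.diagonal (fun i => (A i i)⁻¹)) ∧
    ∀ hS : (∑ i, p i • (hGinv.sqrt * Z i * G⁻¹ * Z i * hGinv.sqrt)).IsHermitian,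
      (⨆ j, hS.eigenvalues j) = A.trace / (⨅ i, A i i) := by
  have : Nonempty (Fin n) := ⟨⟨0, hn⟩⟩
  set T := hA.posSemidef.sqrt
  have hTT : T * T = A := hA.posSemidef.sqrt_mul_self
  have htr : 0 < A.trace := hA.trace_pos
  have hGinvA : G⁻¹ = A.trace • A⁻¹ := by
    simp only [hG, hp, hZ]
    rw [sum_div_smul_inv_smul_conj_single T (fun i => hA.diag_pos.ne'), hTT,
      inv_smul_eq_smul_inv (hA.isUnit.map detMonoidHom) htr.ne']
  have hGinvT : G⁻¹ = A.trace • (T * T)⁻¹ := by rw [hGinvA, hTT]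
  have hGinvSqrt : hGinv.sqrt = √A.trace • T⁻¹ :=
    hA.posSemidef.sqrt_eq_smul_inv_sqrt hGinv htr.le hGinvA
  have hdiag : ∑ i, p i • (hGinv.sqrt * Z i * G⁻¹ * Z i * hGinv.sqrt)
      = diagonal fun i => A.trace / A i i := by
    rw [hGinvSqrt, hGinvT, ← sum_single_eq_diagonal]
    refine Finset.sum_congr rfl fun i _ => ?_
    rw [hp, hZ, div_smul_sandwich_conj_single hA.isUnit_det_sqrt hA.diag_pos.ne' htr, smul_single,
      smul_eq_mul, mul_one]
  refine ⟨by rw [hdiag, ← diagonal_smul]; simp only [Pi.smul_def, smul_eq_mul, div_eq_mul_inv],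
    fun hS => ?_⟩
  rw [hS.iSup_eigenvalues_of_eq_diagonal hdiag]
  exact Real.ciSup_div_eq_div_ciInf htr.le fun i => hA.diag_pos
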